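/- arXiv:1702.04748 — 3 statements merged into one kernel-verified Lean document; each statement's English description precedes it below -/
import Mathlib

section
/- Let k ≥ 2 and δ > 0, and set M = (1-δ')((1+β)I - βJ) on ℝ^k, where I is the identity matrix, J is the all-ones matrix, β satisfies (k + δk - δ - 2)β² - 2β + δ = 0, and 1-δ' = 1/√(1+(k-1)β²). Then M² = (1+δ)I - δJ. -/
/-- The matrix `M = (1-δ')((1+β)I - βJ)` squares to `Σ = (1+δ)I - δJ`, given
the relations `(k + δk - δ - 2)β² - 2β + δ = 0` and `1-δ' = 1/√(1+(k-1)β²)`. -/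
theorem sqrt_covariance_matrix {k : ℕ} (hk : 2 ≤ k) (δ δ' β : ℝ) (hδ : 0 < δ)
    (hβ : ((k : ℝ) + δ * k - δ - 2) * β ^ 2 - 2 * β + δ = 0)
    (hδ' : 1 - δ' = 1 / Real.sqrt (1 + ((k : ℝ) - 1) * β ^ 2))
    (M : Matrix (Fin k) (Fin k) ℝ)
    (hM : M = (1 - δ') • ((1 + β) • (1 : Matrix (Fin k) (Fin k) ℝ) -
      β • Matrix.of (fun _ _ => (1 : ℝ)))) :
    M * M = (1 + δ) • (1 : Matrix (Fin k) (Fin k) ℝ) -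
      δ • Matrix.of (fun _ _ => (1 : ℝ)) := by
  set J : Matrix (Fin k) (Fin k) ℝ := Matrix.of (fun _ _ => (1:ℝ)) with hJ
  have hk1 : (1:ℝ) ≤ (k:ℝ) := by exact_mod_cast Nat.one_le_of_lt hk
  have hJJ : J * J = (k:ℝ) • J := by
    ext i j
    simp [hJ, Matrix.mul_apply]
  have ht : (0:ℝ) < 1 + ((k:ℝ)-1) * β^2 := by nlinarith [sq_nonneg β]
  have hc : (1-δ')^2 = 1 / (1 + ((k:ℝ)-1)*β^2) := by
    rw [hδ', div_pow, one_pow, Real.sq_sqrt ht.le]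
  have hδt : δ * (1 + ((k:ℝ)-1)*β^2) = 2*β - ((k:ℝ)-2)*β^2 := by linear_combination hβ
  have h1 : M * M = ((1-δ')^2 * (1+β)^2) • (1 : Matrix (Fin k) (Fin k) ℝ)
      - ((1-δ')^2 * (2*β*(1+β) - β^2*(k:ℝ))) • J := by
    subst hM
    simp only [Matrix.smul_mul, Matrix.mul_smul, Matrix.sub_mul, Matrix.mul_sub,
      Matrix.one_mul, Matrix.mul_one, smul_smul, smul_sub, hJJ]
    module
  have e1 : (1-δ')^2 * (1+β)^2 = 1 + δ := by
    rw [hc]; field_simp; linear_combination -hδt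
  have e2 : (1-δ')^2 * (2*β*(1+β) - β^2*(k:ℝ)) = δ := by
    rw [hc]; field_simp; linear_combination -hδt
  rw [h1, e1, e2]
end

section
/- For the distribution D_{k,ε} and any i ≠ j, the covariance of coordinates x_i, x_j (viewed as 0/1-valued) equals -ε/(2(1-α)), where α = (k-1)ε. -/
/-
Each coordinate x ↦ x w is 0 at the zero string, equals a ↦ a ⬝ w on the Hadamard codeword of a,
and is 1 on exactly one weight-one string. For w ≠ 0 the functional a ↦ a ⬝ w is a nonzero
additive map to ZMod 2, so translating by a vector t with t ⬝ w = 1 swaps its two fibres: it is 1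
on half of F_2^m. For w ≠ w' the three functionals for w, w' and w + w' are nonzero, and the
identity [x = 1] + [y = 1] - [x + y = 1] = 2 [x = 1][y = 1] shows that both are 1 on a quarter of
F_2^m. Hence each marginal is 1/2 and the joint moment is (1/(k+1) - ε)(k+1)/(4(1-α)); the
weight-one strings contribute ε/(1-α) to the marginals and nothing to the joint moment.
-/

open Finset

/-- Inner product over `F_2^m`. -/
def dot2 {m : ℕ} (a w : Fin m → ZMod 2) : ZMod 2 := ∑ i, a i * w i

/-- Coordinates of the Hadamard predicate: nonzero vectors of `F_2^m`. -/
abbrev Coord (m : ℕ) := {w : Fin m → ZMod 2 // w ≠ 0}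

/-- The Hadamard codeword associated to `a ∈ F_2^m`. -/
def hadCW {m : ℕ} (a : Fin m → ZMod 2) : Coord m → ZMod 2 := fun w => dot2 a w.val

/-- The weight-one string `e_{w0}`. -/
def ebas {m : ℕ} (w0 : Coord m) : Coord m → ZMod 2 := fun w => if w = w0 then 1 else 0

/-- The real 0/1 value of a bit. -/
noncomputable def bval (b : ZMod 2) : ℝ := if b = 1 then 1 else 0

theorem ZMod.one_add_one : (1 + 1 : ZMod 2) = 0 := rfl

theorem ZMod.two_eq_zero_or_eq_one (x : ZMod 2) : x = 0 ∨ x = 1 := by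
  revert x; decide

@[simp]
theorem bval_zero : bval 0 = 0 := if_neg zero_ne_one

@[simp]
theorem bval_one : bval 1 = 1 := if_pos rfl

theorem bval_add_one (x : ZMod 2) : bval (x + 1) = 1 - bval x := by
  rcases x.two_eq_zero_or_eq_one with rfl | rfl <;> simp [ZMod.one_add_one]

theorem bval_add_bval_sub_bval_add (x y : ZMod 2) :
    bval x + bval y - bval (x + y) = 2 * (bval x * bval y) := by
  rcases x.two_eq_zero_or_eq_one with rfl | rfl <;>
    rcases y.two_eq_zero_or_eq_one with rfl | rfl <;> simp [ZMod.one_add_one]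
  exact one_add_one_eq_two

section

variable {G : Type*} [AddCommGroup G] [Fintype G]

theorem two_mul_sum_bval (f : G →+ ZMod 2) (hf : f ≠ 0) :
    2 * ∑ a, bval (f a) = Fintype.card G := by
  obtain ⟨t, ht⟩ := DFunLike.ne_iff.mp hf
  have ht1 : f t = 1 := by
    simpa using (f t).two_eq_zero_or_eq_one.resolve_left ht
  have hflip : ∑ a, bval (f a) = ∑ a, (1 - bval (f a)) :=
    Fintype.sum_equiv (Equiv.addRight t) _ _ fun a => by simp [ht1, bval_add_one]
  rw [sum_sub_distrib, sum_const, card_univ, nsmul_one] at hflip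
  linarith

theorem four_mul_sum_bval_mul (f g : G →+ ZMod 2) (hf : f ≠ 0) (hg : g ≠ 0) (hfg : f ≠ g) :
    4 * ∑ a, bval (f a) * bval (g a) = Fintype.card G := by
  have hfg' : f + g ≠ 0 := fun h =>
    hfg (AddMonoidHom.ext fun a => CharTwo.add_eq_zero.mp (DFunLike.congr_fun h a))
  have key : 2 * ∑ a, bval (f a) * bval (g a)
      = ∑ a, bval (f a) + ∑ a, bval (g a) - ∑ a, bval ((f + g) a) := by
    simp only [mul_sum, ← sum_add_distrib, ← sum_sub_distrib, AddMonoidHom.add_apply,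
      bval_add_bval_sub_bval_add]
  linarith [two_mul_sum_bval f hf, two_mul_sum_bval g hg, two_mul_sum_bval _ hfg']

end

theorem sum_ite_eq_sum_map {α β M : Type*} [Fintype β] [AddCommMonoid M]
    (e : α ↪ β) (s : Finset α) (P : β → Prop) [DecidablePred P]
    (hP : ∀ x, P x ↔ ∃ a ∈ s, e a = x) (g : β → M) :
    ∑ x, (if P x then g x else 0) = ∑ a ∈ s, g (e a) := by
  rw [← sum_filter, ← sum_map]
  congr 1
  ext x
  simp [hP]

variable {m : ℕ}

theorem dot2_eq_dotProduct (a w : Fin m → ZMod 2) : dot2 a w = a ⬝ᵥ w := rfl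

def dot2Hom (w : Fin m → ZMod 2) : (Fin m → ZMod 2) →+ ZMod 2 :=
  AddMonoidHom.mk' (dot2 · w) fun a b => add_dotProduct a b w

theorem dot2Hom_injective : Function.Injective (dot2Hom (m := m)) := fun w w' h =>
  funext fun i => by
    simpa [dot2Hom, dot2_eq_dotProduct, single_dotProduct] using
      DFunLike.congr_fun h (Pi.single i 1)

theorem dot2Hom_ne_zero {w : Fin m → ZMod 2} (hw : w ≠ 0) : dot2Hom w ≠ 0 := by
  intro h
  refine hw (dot2Hom_injective (h.trans ?_))
  ext a
  simp [dot2Hom, dot2_eq_dotProduct]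

theorem hadCW_apply (a : Fin m → ZMod 2) (w : Coord m) : hadCW a w = dot2Hom w.val a := rfl

theorem two_mul_sum_bval_hadCW (w : Coord m) :
    2 * ∑ a with a ≠ 0, bval (hadCW a w) = 2 ^ m := by
  rw [sum_filter_of_ne fun a _ h => by rintro rfl; simp [hadCW_apply] at h]
  simpa [hadCW_apply] using two_mul_sum_bval _ (dot2Hom_ne_zero w.prop)

theorem four_mul_sum_bval_hadCW_mul {w w' : Coord m} (h : w ≠ w') :
    4 * ∑ a with a ≠ 0, bval (hadCW a w) * bval (hadCW a w') = 2 ^ m := by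
  rw [sum_filter_of_ne fun a _ h => by rintro rfl; simp [hadCW_apply] at h]
  simpa [hadCW_apply] using four_mul_sum_bval_mul _ _ (dot2Hom_ne_zero w.prop)
    (dot2Hom_ne_zero w'.prop) (dot2Hom_injective.ne (Subtype.val_injective.ne h))

theorem hadCW_injective : Function.Injective (hadCW (m := m)) := fun a a' h =>
  funext fun i => by
    simpa [hadCW, dot2_eq_dotProduct, dotProduct_single] using
      congr_fun h ⟨Pi.single i 1, by simp⟩

theorem ebas_injective : Function.Injective (ebas (m := m)) := fun w w' h => by
  simpa [ebas] using congr_fun h w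

theorem bval_ebas (w₀ w : Coord m) : bval (ebas w₀ w) = if w = w₀ then 1 else 0 := by
  unfold ebas; split_ifs <;> simp [bval]

theorem sum_bval_ebas (w : Coord m) : ∑ w₀, bval (ebas w₀ w) = 1 := by
  simp [bval_ebas]

theorem sum_bval_ebas_mul {w w' : Coord m} (h : w ≠ w') :
    ∑ w₀, bval (ebas w₀ w) * bval (ebas w₀ w') = 0 := by
  simp [bval_ebas, h]

noncomputable def Dke (m k : ℕ) (ε α : ℝ) (x : Coord m → ZMod 2) : ℝ :=
  (if x = (fun _ => 0) then 1 / (1 - α) * (1 / ((k : ℝ) + 1) - α) else 0) +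
    (if ∃ a : Fin m → ZMod 2, a ≠ 0 ∧ x = hadCW a then
      1 / (1 - α) * (1 / ((k : ℝ) + 1) - ε) else 0) +
    (if ∃ w0 : Coord m, x = ebas w0 then ε / (1 - α) else 0)

theorem sum_Dke_mul (k : ℕ) (ε α : ℝ) (f : (Coord m → ZMod 2) → ℝ) :
    ∑ x, Dke m k ε α x * f x =
      1 / (1 - α) * (1 / ((k : ℝ) + 1) - α) * f (fun _ => 0) +
        1 / (1 - α) * (1 / ((k : ℝ) + 1) - ε) * ∑ a with a ≠ 0, f (hadCW a) +
          ε / (1 - α) * ∑ w₀, f (ebas w₀) := by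
  simp only [Dke, add_mul, ite_mul, zero_mul, sum_add_distrib, sum_ite_eq', mem_univ, if_true,
    mul_sum]
  rw [sum_ite_eq_sum_map ⟨hadCW, hadCW_injective⟩ {a | a ≠ 0} _ (by simp [eq_comm]),
    sum_ite_eq_sum_map ⟨ebas, ebas_injective⟩ univ _ (by simp [eq_comm])]
  rfl

theorem sum_Dke_mul_bval (k : ℕ) (ε α : ℝ) (w : Coord m) :
    ∑ x, Dke m k ε α x * bval (x w) =
      1 / (1 - α) * (1 / ((k : ℝ) + 1) - ε) * (2 ^ m / 2) + ε / (1 - α) := by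
  rw [sum_Dke_mul, sum_bval_ebas, ← two_mul_sum_bval_hadCW w, bval_zero]
  ring

theorem sum_Dke_mul_bval_mul (k : ℕ) (ε α : ℝ) {w w' : Coord m} (h : w ≠ w') :
    ∑ x, Dke m k ε α x * (bval (x w) * bval (x w')) =
      1 / (1 - α) * (1 / ((k : ℝ) + 1) - ε) * (2 ^ m / 4) := by
  rw [sum_Dke_mul, sum_bval_ebas_mul h, ← four_mul_sum_bval_hadCW_mul h, bval_zero]
  ring

theorem Dke_covariance_general (m : ℕ) (k : ℕ) (hk : k = 2 ^ m - 1)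
    (ε α : ℝ) (hα : α = ((k : ℝ) - 1) * ε)
    (D : (Coord m → ZMod 2) → ℝ)
    (hD : ∀ x : Coord m → ZMod 2,
      D x = (if x = (fun _ => 0) then 1 / (1 - α) * (1 / ((k : ℝ) + 1) - α) else 0) +
        (if ∃ a : Fin m → ZMod 2, a ≠ 0 ∧ x = hadCW a then
          1 / (1 - α) * (1 / ((k : ℝ) + 1) - ε) else 0) +
        (if ∃ w0 : Coord m, x = ebas w0 then ε / (1 - α) else 0)) :
    ∀ w1 w2 : Coord m, w1 ≠ w2 →
      (∑ x : Coord m → ZMod 2, D x * (bval (x w1) * bval (x w2))) -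
        (∑ x : Coord m → ZMod 2, D x * bval (x w1)) *
          (∑ x : Coord m → ZMod 2, D x * bval (x w2)) = -ε / (2 * (1 - α)) := by
  intro w1 w2 hw
  obtain rfl : D = Dke m k ε α := funext hD
  rw [sum_Dke_mul_bval_mul k ε α hw, sum_Dke_mul_bval, sum_Dke_mul_bval]
  have hk_add_one : (k : ℝ) + 1 = 2 ^ m := by
    rw [hk, Nat.cast_sub Nat.one_le_two_pow]
    push_cast
    ring
  rw [← hk_add_one]
  by_cases hα1 : 1 - α = 0
  -- at α = 1 every mass is 0 (as x / 0 = 0 in Lean), and so is the right-hand side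
  · simp [hα1]
  · field_simp
    rw [hα]
    ring

/-- Under `D_{k,ε}`, the covariance of two distinct coordinates (as 0/1-valued
random variables) equals `-ε/(2(1-α))`. -/
theorem Dke_covariance (m : ℕ) (hm : 2 < m) (k : ℕ) (hk : k = 2 ^ m - 1)
    (ε α : ℝ) (hε0 : 0 < ε) (hε : ε ≤ 1 / (k : ℝ) ^ 2) (hα : α = ((k : ℝ) - 1) * ε)
    (D : (Coord m → ZMod 2) → ℝ)
    (hD : ∀ x : Coord m → ZMod 2,
      D x = (if x = (fun _ => 0) then 1 / (1 - α) * (1 / ((k : ℝ) + 1) - α) else 0) +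
        (if ∃ a : Fin m → ZMod 2, a ≠ 0 ∧ x = hadCW a then
          1 / (1 - α) * (1 / ((k : ℝ) + 1) - ε) else 0) +
        (if ∃ w0 : Coord m, x = ebas w0 then ε / (1 - α) else 0)) :
    ∀ w1 w2 : Coord m, w1 ≠ w2 →
      (∑ x : Coord m → ZMod 2, D x * (bval (x w1) * bval (x w2))) -
        (∑ x : Coord m → ZMod 2, D x * bval (x w1)) *
          (∑ x : Coord m → ZMod 2, D x * bval (x w2)) = -ε / (2 * (1 - α)) :=
  Dke_covariance_general m k hk ε α hα D hD
end

section
/- Let (Ω_1 × Ω_2, μ) be a finite correlated space with ρ(Ω_1, Ω_2; μ) ≤ ρ, with product space (Ω_1^n × Ω_2^n, μ^{⊗n}). Let U be the Markov operator mapping g : Ω_2^n → ℝ to (Ug)(x) = E[g(Y) | X = x]. Then for any g and any S ⊆ [n], the Efron–Stein component satisfies ‖U(g_S)‖_2 ≤ ρ^{|S|}‖g_S‖_2. -/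
open Finset

lemma sum_update_group {n : ℕ} {Ω : Type*} [Fintype Ω] [DecidableEq Ω]
    (i : Fin n) (c : Ω) (F : (Fin n → Ω) → ℝ) :
    ∑ x : Fin n → Ω, F x
      = ∑ x : Fin n → Ω, if x i = c then ∑ a : Ω, F (Function.update x i a) else 0 := by
  classical
  rw [← Finset.sum_filter]
  rw [← Finset.sum_product']
  refine (Finset.sum_nbij' (fun p : (Fin n → Ω) × Ω => Function.update p.1 i p.2)
    (fun x => (Function.update x i c, x i)) ?_ ?_ ?_ ?_ ?_).symm
  · intro p hp; exact Finset.mem_univ _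
  · intro x hx
    simp only [Finset.mem_product, Finset.mem_filter, Finset.mem_univ, true_and]
    exact ⟨Function.update_self i c x, trivial⟩
  · rintro ⟨x, a⟩ hp
    simp only [Finset.mem_product, Finset.mem_filter, Finset.mem_univ, true_and] at hp
    ext j
    · by_cases hj : j = i
      · subst hj; simp [hp.1]
      · simp [Function.update_of_ne hj]
    · simp
  · intro x hx
    funext j
    by_cases hj : j = i
    · subst hj; simp
    · simp [Function.update_of_ne hj]
  · intro p hp; rfl

/-- partially applied Markov operator on the Efron–Stein component -/
noncomputable def ESh {Ω₁ Ω₂ : Type*} [Fintype Ω₂] {n : ℕ} (μ : Ω₁ × Ω₂ → ℝ) (ν₁ : Ω₁ → ℝ) (ν₂ : Ω₂ → ℝ)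
    (gS : (Fin n → Ω₂) → ℝ) (T : Finset (Fin n)) (x : Fin n → Ω₁) (y : Fin n → Ω₂) : ℝ :=
  ∑ z : Fin n → Ω₂, (∏ j ∈ T, μ (x j, z j) / ν₁ (x j)) *
    ((∏ j ∈ Tᶜ, ν₂ (z j)) * gS (fun j => if j ∈ T then z j else y j))

noncomputable def ESA {Ω₁ Ω₂ : Type*} [Fintype Ω₁] [Fintype Ω₂] {n : ℕ} (μ : Ω₁ × Ω₂ → ℝ)
    (ν₁ : Ω₁ → ℝ) (ν₂ : Ω₂ → ℝ) (gS : (Fin n → Ω₂) → ℝ) (T : Finset (Fin n)) : ℝ :=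
  ∑ x : Fin n → Ω₁, ∑ y : Fin n → Ω₂,
    ((∏ j, ν₁ (x j)) * ∏ j, ν₂ (y j)) * (ESh μ ν₁ ν₂ gS T x y) ^ 2

lemma ESh_congr_x {Ω₁ Ω₂ : Type*} [Fintype Ω₂] {n : ℕ} (μ : Ω₁ × Ω₂ → ℝ)
    (ν₁ : Ω₁ → ℝ) (ν₂ : Ω₂ → ℝ) (gS : (Fin n → Ω₂) → ℝ) (T : Finset (Fin n))
    {x x' : Fin n → Ω₁} (h : ∀ j ∈ T, x j = x' j) (y : Fin n → Ω₂) :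
    ESh μ ν₁ ν₂ gS T x y = ESh μ ν₁ ν₂ gS T x' y := by
  unfold ESh
  refine Finset.sum_congr rfl fun z _ => ?_
  congr 1
  exact Finset.prod_congr rfl fun j hj => by rw [h j hj]

lemma ESh_congr_y {Ω₁ Ω₂ : Type*} [Fintype Ω₂] {n : ℕ} (μ : Ω₁ × Ω₂ → ℝ)
    (ν₁ : Ω₁ → ℝ) (ν₂ : Ω₂ → ℝ) (S : Finset (Fin n)) (gS : (Fin n → Ω₂) → ℝ)
    (hdep : ∀ y y' : Fin n → Ω₂, (∀ i ∈ S, y i = y' i) → gS y = gS y')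
    (T : Finset (Fin n)) (x : Fin n → Ω₁)
    {y y' : Fin n → Ω₂} (h : ∀ j ∈ S, j ∉ T → y j = y' j) :
    ESh μ ν₁ ν₂ gS T x y = ESh μ ν₁ ν₂ gS T x y' := by
  unfold ESh
  refine Finset.sum_congr rfl fun z _ => ?_
  congr 2
  apply hdep
  intro j hj
  by_cases hjT : j ∈ T
  · simp [hjT]
  · simp only [hjT, if_false]
    exact h j hj hjT

lemma ESh_insert {Ω₁ Ω₂ : Type*} [Fintype Ω₂] [DecidableEq Ω₂] [Nonempty Ω₂] {n : ℕ}
    (μ : Ω₁ × Ω₂ → ℝ) (ν₁ : Ω₁ → ℝ) (ν₂ : Ω₂ → ℝ) (hν₂sum : ∑ b : Ω₂, ν₂ b = 1)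
    (gS : (Fin n → Ω₂) → ℝ) (T : Finset (Fin n)) (i : Fin n) (hi : i ∉ T)
    (x : Fin n → Ω₁) (y : Fin n → Ω₂) :
    ESh μ ν₁ ν₂ gS (insert i T) x y
      = ∑ b : Ω₂, μ (x i, b) / ν₁ (x i) * ESh μ ν₁ ν₂ gS T x (Function.update y i b) := by
  classical
  obtain ⟨c⟩ := (inferInstance : Nonempty Ω₂)
  unfold ESh
  rw [sum_update_group i c]
  conv_rhs => enter [2, b]; rw [sum_update_group i c, Finset.mul_sum]
  rw [Finset.sum_comm]
  refine Finset.sum_congr rfl fun z _ => ?_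
  by_cases hz : z i = c
  · simp only [hz, if_true, mul_ite, mul_zero]
    refine Finset.sum_congr rfl fun b _ => ?_
    have h1 : ∏ j ∈ insert i T, μ (x j, Function.update z i b j) / ν₁ (x j)
        = (μ (x i, b) / ν₁ (x i)) * ∏ j ∈ T, μ (x j, z j) / ν₁ (x j) := by
      rw [Finset.prod_insert hi, Function.update_self]
      congr 1
      exact Finset.prod_congr rfl fun j hj =>
        by rw [Function.update_of_ne (ne_of_mem_of_not_mem hj hi)]
    have h2 : ∏ j ∈ (insert i T)ᶜ, ν₂ (Function.update z i b j)
        = ∏ j ∈ Tᶜ.erase i, ν₂ (z j) := by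
      rw [Finset.compl_insert]
      exact Finset.prod_congr rfl fun j hj =>
        by rw [Function.update_of_ne (Finset.ne_of_mem_erase hj)]
    have h3 : (fun j => if j ∈ insert i T then Function.update z i b j else y j)
        = fun j => if j ∈ T then z j else Function.update y i b j := by
      funext j
      by_cases hj : j = i
      · subst hj; simp [hi]
      · by_cases hjT : j ∈ T <;>
          simp [hjT, hj, Function.update_of_ne hj, Finset.mem_insert]
    rw [h1, h2, h3]
    have h4 : ∀ b' : Ω₂,
        (∏ j ∈ T, μ (x j, Function.update z i b' j) / ν₁ (x j)) *
          ((∏ j ∈ Tᶜ, ν₂ (Function.update z i b' j)) *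
            gS (fun j => if j ∈ T then Function.update z i b' j
              else Function.update y i b j))
        = ν₂ b' * ((∏ j ∈ T, μ (x j, z j) / ν₁ (x j)) *
            ((∏ j ∈ Tᶜ.erase i, ν₂ (z j)) *
              gS (fun j => if j ∈ T then z j else Function.update y i b j))) := by
      intro b'
      have e1 : ∏ j ∈ T, μ (x j, Function.update z i b' j) / ν₁ (x j)
          = ∏ j ∈ T, μ (x j, z j) / ν₁ (x j) :=
        Finset.prod_congr rfl fun j hj =>
          by rw [Function.update_of_ne (ne_of_mem_of_not_mem hj hi)]
      have e2 : ∏ j ∈ Tᶜ, ν₂ (Function.update z i b' j)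
          = ν₂ b' * ∏ j ∈ Tᶜ.erase i, ν₂ (z j) := by
        rw [← Finset.mul_prod_erase Tᶜ _ (Finset.mem_compl.mpr hi), Function.update_self]
        congr 1
        exact Finset.prod_congr rfl fun j hj =>
          by rw [Function.update_of_ne (Finset.ne_of_mem_erase hj)]
      have e3 : (fun j => if j ∈ T then Function.update z i b' j
            else Function.update y i b j)
          = fun j => if j ∈ T then z j else Function.update y i b j := by
        funext j
        by_cases hjT : j ∈ T
        · simp only [hjT, if_true]
          exact Function.update_of_ne (ne_of_mem_of_not_mem hjT hi) _ _
        · simp [hjT]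
      rw [e1, e2, e3]
      ring
    simp only [h4]
    rw [← Finset.sum_mul, hν₂sum, one_mul]
    ring
  · simp [hz]

lemma pi_sum_one {Ω : Type*} [Fintype Ω] {n : ℕ} (ν : Ω → ℝ) (h : ∑ b, ν b = 1) :
    ∑ z : Fin n → Ω, ∏ j, ν (z j) = 1 := by
  classical
  rw [← Fintype.prod_sum]
  simp [h]

lemma mean_zero_update {Ω₂ : Type*} [Fintype Ω₂] [DecidableEq Ω₂] {n : ℕ}
    (ν₂ : Ω₂ → ℝ) (S : Finset (Fin n)) (gS : (Fin n → Ω₂) → ℝ)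
    (hmean : ∀ S' : Finset (Fin n), ¬ S ⊆ S' → ∀ a : Fin n → Ω₂,
      ∑ y ∈ Finset.univ.filter (fun y : Fin n → Ω₂ => ∀ i ∈ S', y i = a i),
        (∏ i : Fin n, ν₂ (y i)) * gS y = 0)
    (i : Fin n) (hiS : i ∈ S) (w : Fin n → Ω₂)
    (hw : ∀ j, j ≠ i → ν₂ (w j) ≠ 0) :
    ∑ b : Ω₂, ν₂ b * gS (Function.update w i b) = 0 := by
  classical
  have hnotsub : ¬ S ⊆ Finset.univ.erase i := fun h =>
    (Finset.mem_erase.mp (h hiS)).1 rfl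
  have H := hmean (Finset.univ.erase i) hnotsub w
  have hre : ∑ y ∈ Finset.univ.filter
        (fun y : Fin n → Ω₂ => ∀ j ∈ Finset.univ.erase i, y j = w j),
        (∏ j : Fin n, ν₂ (y j)) * gS y
      = ∑ b : Ω₂, (∏ j ∈ Finset.univ.erase i, ν₂ (w j)) *
          (ν₂ b * gS (Function.update w i b)) := by
    refine Finset.sum_nbij' (fun y => y i) (fun b => Function.update w i b)
      (fun y _ => Finset.mem_univ _) (fun b _ => ?_) (fun y hy => ?_) (fun b _ => ?_)
      (fun y hy => ?_)
    · simp only [Finset.mem_filter, Finset.mem_univ, true_and]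
      intro j hj
      exact Function.update_of_ne (Finset.mem_erase.mp hj).1 _ _
    · simp only [Finset.mem_filter, Finset.mem_univ, true_and] at hy
      funext j
      show Function.update w i (y i) j = y j
      by_cases hj : j = i
      · subst hj; simp
      · rw [Function.update_of_ne hj]
        exact (hy j (Finset.mem_erase.mpr ⟨hj, Finset.mem_univ _⟩)).symm
    · simp
    · simp only [Finset.mem_filter, Finset.mem_univ, true_and] at hy
      have hupd : Function.update w i (y i) = y := by
        funext j
        by_cases hj : j = i
        · subst hj; simp
        · rw [Function.update_of_ne hj]
          exact (hy j (Finset.mem_erase.mpr ⟨hj, Finset.mem_univ _⟩)).symm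
      rw [hupd]
      rw [← Finset.mul_prod_erase Finset.univ (fun j => ν₂ (y j)) (Finset.mem_univ i)]
      have : ∏ j ∈ Finset.univ.erase i, ν₂ (y j)
          = ∏ j ∈ Finset.univ.erase i, ν₂ (w j) :=
        Finset.prod_congr rfl fun j hj => by rw [hy j hj]
      rw [this]
      ring
  rw [hre, ← Finset.mul_sum] at H
  have hprod : (∏ j ∈ Finset.univ.erase i, ν₂ (w j)) ≠ 0 :=
    Finset.prod_ne_zero_iff.mpr fun j hj => hw j (Finset.mem_erase.mp hj).1
  exact (mul_eq_zero.mp H).resolve_left hprod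

lemma ESh_mean_zero {Ω₁ Ω₂ : Type*} [Fintype Ω₁] [Fintype Ω₂] [DecidableEq Ω₂] {n : ℕ}
    (μ : Ω₁ × Ω₂ → ℝ) (hpos : ∀ p, 0 ≤ μ p)
    (ν₁ : Ω₁ → ℝ) (ν₂ : Ω₂ → ℝ) (hν₂ : ∀ b, ν₂ b = ∑ a : Ω₁, μ (a, b))
    (S : Finset (Fin n)) (gS : (Fin n → Ω₂) → ℝ)
    (hmean : ∀ S' : Finset (Fin n), ¬ S ⊆ S' → ∀ a : Fin n → Ω₂,
      ∑ y ∈ Finset.univ.filter (fun y : Fin n → Ω₂ => ∀ i ∈ S', y i = a i),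
        (∏ i : Fin n, ν₂ (y i)) * gS y = 0)
    (T : Finset (Fin n)) (i : Fin n) (hiS : i ∈ S) (hiT : i ∉ T)
    (x : Fin n → Ω₁) (y : Fin n → Ω₂) (hy : ∀ j, j ≠ i → ν₂ (y j) ≠ 0) :
    ∑ b : Ω₂, ν₂ b * ESh μ ν₁ ν₂ gS T x (Function.update y i b) = 0 := by
  classical
  unfold ESh
  simp only [Finset.mul_sum]
  rw [Finset.sum_comm]
  refine Finset.sum_eq_zero fun z _ => ?_
  have hmerge : ∀ b : Ω₂, (fun j => if j ∈ T then z j else Function.update y i b j)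
      = Function.update (fun j => if j ∈ T then z j else y j) i b := by
    intro b; funext j
    by_cases hj : j = i
    · subst hj; simp [hiT]
    · by_cases hjT : j ∈ T <;> simp [hjT, Function.update_of_ne hj]
  simp only [hmerge]
  have hrw : ∀ b : Ω₂, ν₂ b * ((∏ j ∈ T, μ (x j, z j) / ν₁ (x j)) *
        ((∏ j ∈ Tᶜ, ν₂ (z j)) *
          gS (Function.update (fun j => if j ∈ T then z j else y j) i b)))
      = ((∏ j ∈ T, μ (x j, z j) / ν₁ (x j)) * (∏ j ∈ Tᶜ, ν₂ (z j))) *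
        (ν₂ b * gS (Function.update (fun j => if j ∈ T then z j else y j) i b)) := by
    intro b; ring
  simp only [hrw]
  rw [← Finset.mul_sum]
  by_cases hC : (∏ j ∈ T, μ (x j, z j) / ν₁ (x j)) * (∏ j ∈ Tᶜ, ν₂ (z j)) = 0
  · rw [hC, zero_mul]
  · rw [mean_zero_update ν₂ S gS hmean i hiS _ ?_, mul_zero]
    intro j hj
    by_cases hjT : j ∈ T
    · simp only [hjT, if_true]
      have hK : μ (x j, z j) / ν₁ (x j) ≠ 0 := by
        intro h0
        exact hC (mul_eq_zero_of_left (Finset.prod_eq_zero hjT h0) _)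
      have hμ : μ (x j, z j) ≠ 0 := fun h0 => hK (by rw [h0, zero_div])
      intro h0
      apply hμ
      have hle : μ (x j, z j) ≤ ν₂ (z j) := by
        rw [hν₂]
        exact Finset.single_le_sum (f := fun a => μ (a, z j))
          (fun a _ => hpos _) (Finset.mem_univ (x j))
      exact le_antisymm (h0 ▸ hle) (hpos _)
    · simp only [hjT, if_false]
      exact hy j hj

lemma ESA_insert_eq {Ω₁ Ω₂ : Type*} [Fintype Ω₁] [Fintype Ω₂] [DecidableEq Ω₂]
    [Nonempty Ω₂] {n : ℕ}
    (μ : Ω₁ × Ω₂ → ℝ) (ν₁ : Ω₁ → ℝ) (hν₁ : ∀ a, ν₁ a = ∑ b : Ω₂, μ (a, b))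
    (ν₂ : Ω₂ → ℝ) (hν₂sum : ∑ b : Ω₂, ν₂ b = 1)
    (S : Finset (Fin n)) (gS : (Fin n → Ω₂) → ℝ)
    (hdep : ∀ y y' : Fin n → Ω₂, (∀ i ∈ S, y i = y' i) → gS y = gS y')
    (T : Finset (Fin n)) (i : Fin n) (hiS : i ∉ S) (hiT : i ∉ T) :
    ESA μ ν₁ ν₂ gS (insert i T) = ESA μ ν₁ ν₂ gS T := by
  unfold ESA
  refine Finset.sum_congr rfl fun x _ => Finset.sum_congr rfl fun y _ => ?_
  by_cases hW : (∏ j, ν₁ (x j)) * ∏ j, ν₂ (y j) = 0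
  · rw [hW, zero_mul, zero_mul]
  congr 2
  have hν₁i : ν₁ (x i) ≠ 0 := by
    intro h0
    exact hW (mul_eq_zero_of_left (Finset.prod_eq_zero (Finset.mem_univ i) h0) _)
  rw [ESh_insert μ ν₁ ν₂ hν₂sum gS T i hiT x y]
  have hconst : ∀ b : Ω₂, ESh μ ν₁ ν₂ gS T x (Function.update y i b)
      = ESh μ ν₁ ν₂ gS T x y := by
    intro b
    refine ESh_congr_y μ ν₁ ν₂ S gS hdep T x fun j hjS _ => ?_
    exact Function.update_of_ne (ne_of_mem_of_not_mem hjS hiS) _ _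
  simp only [hconst]
  rw [← Finset.sum_mul, ← Finset.sum_div, ← hν₁ (x i), div_self hν₁i, one_mul]

lemma ESA_empty {Ω₁ Ω₂ : Type*} [Fintype Ω₁] [Fintype Ω₂] {n : ℕ}
    (μ : Ω₁ × Ω₂ → ℝ) (ν₁ : Ω₁ → ℝ) (ν₂ : Ω₂ → ℝ) (gS : (Fin n → Ω₂) → ℝ)
    (hν₁sum : ∑ a : Ω₁, ν₁ a = 1) (hν₂sum : ∑ b : Ω₂, ν₂ b = 1) :
    ESA μ ν₁ ν₂ gS (∅ : Finset (Fin n))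
      = ∑ y : Fin n → Ω₂, (∏ j, ν₂ (y j)) * gS y ^ 2 := by
  unfold ESA
  have hESh : ∀ (x : Fin n → Ω₁) (y : Fin n → Ω₂), ESh μ ν₁ ν₂ gS ∅ x y = gS y := by
    intro x y
    unfold ESh
    simp only [Finset.prod_empty, one_mul, Finset.notMem_empty, if_false,
      Finset.compl_empty]
    rw [← Finset.sum_mul, pi_sum_one ν₂ hν₂sum, one_mul]
  simp only [hESh]
  have hrw : ∀ (x : Fin n → Ω₁) (y : Fin n → Ω₂),
      ((∏ j, ν₁ (x j)) * ∏ j, ν₂ (y j)) * gS y ^ 2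
        = (∏ j, ν₁ (x j)) * ((∏ j, ν₂ (y j)) * gS y ^ 2) := fun x y => by ring
  simp only [hrw]
  simp only [← Finset.mul_sum]
  rw [← Finset.sum_mul, pi_sum_one ν₁ hν₁sum, one_mul]

lemma ESA_univ {Ω₁ Ω₂ : Type*} [Fintype Ω₁] [Fintype Ω₂] {n : ℕ}
    (μ : Ω₁ × Ω₂ → ℝ) (ν₁ : Ω₁ → ℝ) (ν₂ : Ω₂ → ℝ) (gS : (Fin n → Ω₂) → ℝ)
    (hν₂sum : ∑ b : Ω₂, ν₂ b = 1)
    (U : ((Fin n → Ω₂) → ℝ) → ((Fin n → Ω₁) → ℝ))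
    (hU : ∀ (g : (Fin n → Ω₂) → ℝ) (x : Fin n → Ω₁),
      U g x = ∑ y : Fin n → Ω₂, (∏ i : Fin n, μ (x i, y i) / ν₁ (x i)) * g y) :
    ESA μ ν₁ ν₂ gS (Finset.univ : Finset (Fin n))
      = ∑ x : Fin n → Ω₁, (∏ j, ν₁ (x j)) * U gS x ^ 2 := by
  unfold ESA
  have hESh : ∀ (x : Fin n → Ω₁) (y : Fin n → Ω₂),
      ESh μ ν₁ ν₂ gS Finset.univ x y = U gS x := by
    intro x y
    rw [hU]
    unfold ESh
    simp
  simp only [hESh]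
  refine Finset.sum_congr rfl fun x _ => ?_
  have hrw : ∀ y : Fin n → Ω₂,
      ((∏ j, ν₁ (x j)) * ∏ j, ν₂ (y j)) * U gS x ^ 2
        = (∏ j, ν₂ (y j)) * ((∏ j, ν₁ (x j)) * U gS x ^ 2) := fun y => by ring
  simp only [hrw]
  rw [← Finset.sum_mul, pi_sum_one ν₂ hν₂sum, one_mul]

lemma sum_update_group2 {n : ℕ} {Ω₁ Ω₂ : Type*} [Fintype Ω₁] [Fintype Ω₂]
    [DecidableEq Ω₁] [DecidableEq Ω₂] (i : Fin n) (c₁ : Ω₁) (c₂ : Ω₂)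
    (F : (Fin n → Ω₁) → (Fin n → Ω₂) → ℝ) :
    ∑ x : Fin n → Ω₁, ∑ y : Fin n → Ω₂, F x y
      = ∑ x : Fin n → Ω₁, ∑ y : Fin n → Ω₂,
          if x i = c₁ ∧ y i = c₂ then
            ∑ a : Ω₁, ∑ b : Ω₂, F (Function.update x i a) (Function.update y i b)
          else 0 := by
  rw [sum_update_group i c₁ (fun x => ∑ y, F x y)]
  refine Finset.sum_congr rfl fun x _ => ?_
  by_cases h1 : x i = c₁
  · simp only [h1, if_true, true_and]
    have : ∀ a : Ω₁, ∑ y : Fin n → Ω₂, F (Function.update x i a) y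
        = ∑ y : Fin n → Ω₂, if y i = c₂ then
            ∑ b : Ω₂, F (Function.update x i a) (Function.update y i b) else 0 :=
      fun a => sum_update_group i c₂ _
    simp only [this]
    rw [Finset.sum_comm]
    refine Finset.sum_congr rfl fun y _ => ?_
    by_cases h2 : y i = c₂ <;> simp [h2]
  · simp [h1]

lemma single_step {Ω₁ Ω₂ : Type*} [Fintype Ω₁] [Fintype Ω₂]
    (μ : Ω₁ × Ω₂ → ℝ) (hpos : ∀ p, 0 ≤ μ p)
    (ρ : ℝ) (hρ : 0 ≤ ρ)
    (hcorr : ∀ (f : Ω₁ → ℝ) (g : Ω₂ → ℝ),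
      (∑ p : Ω₁ × Ω₂, μ p * f p.1 = 0) → (∑ p : Ω₁ × Ω₂, μ p * g p.2 = 0) →
      (∑ p : Ω₁ × Ω₂, μ p * f p.1 ^ 2 ≤ 1) → (∑ p : Ω₁ × Ω₂, μ p * g p.2 ^ 2 ≤ 1) →
      ∑ p : Ω₁ × Ω₂, μ p * |f p.1 * g p.2| ≤ ρ)
    (ν₁ : Ω₁ → ℝ) (hν₁ : ∀ a, ν₁ a = ∑ b : Ω₂, μ (a, b))
    (ν₂ : Ω₂ → ℝ) (hν₂ : ∀ b, ν₂ b = ∑ a : Ω₁, μ (a, b))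
    (f : Ω₂ → ℝ) (hf : ∑ b, ν₂ b * f b = 0) :
    ∑ a, ν₁ a * (∑ b, μ (a, b) / ν₁ a * f b) ^ 2
      ≤ ρ ^ 2 * ∑ b, ν₂ b * f b ^ 2 := by
  classical
  set T : Ω₁ → ℝ := fun a => ∑ b, μ (a, b) / ν₁ a * f b with hT
  set P : ℝ := ∑ a, ν₁ a * T a ^ 2 with hPdef
  set Q : ℝ := ∑ b, ν₂ b * f b ^ 2 with hQdef
  have hν₁nonneg : ∀ a, 0 ≤ ν₁ a := fun a => by
    rw [hν₁]; exact Finset.sum_nonneg fun b _ => hpos _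
  have hν₂nonneg : ∀ b, 0 ≤ ν₂ b := fun b => by
    rw [hν₂]; exact Finset.sum_nonneg fun a _ => hpos _
  have hμν₁ : ∀ a b, μ (a, b) ≤ ν₁ a := fun a b => by
    rw [hν₁]; exact Finset.single_le_sum (fun b _ => hpos _) (Finset.mem_univ b)
  have hμν₂ : ∀ a b, μ (a, b) ≤ ν₂ b := fun a b => by
    rw [hν₂]; exact Finset.single_le_sum (f := fun a => μ (a, b)) (fun a _ => hpos _) (Finset.mem_univ a)
  have hν₁zero : ∀ a b, ν₁ a = 0 → μ (a, b) = 0 := fun a b h =>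
    le_antisymm (h ▸ hμν₁ a b) (hpos _)
  have hTmul : ∀ a, ν₁ a * T a = ∑ b, μ (a, b) * f b := by
    intro a
    by_cases h : ν₁ a = 0
    · simp only [h, zero_mul]
      rw [eq_comm, Finset.sum_eq_zero]
      intro b _; rw [hν₁zero a b h, zero_mul]
    · rw [hT, Finset.mul_sum]
      refine Finset.sum_congr rfl fun b _ => ?_
      field_simp
  have hPnonneg : 0 ≤ P := Finset.sum_nonneg fun a _ =>
    mul_nonneg (hν₁nonneg a) (sq_nonneg _)
  have hQnonneg : 0 ≤ Q := Finset.sum_nonneg fun b _ =>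
    mul_nonneg (hν₂nonneg b) (sq_nonneg _)
  by_cases hP0 : P = 0
  · rw [hP0]
    positivity
  have hPpos : 0 < P := lt_of_le_of_ne hPnonneg (Ne.symm hP0)
  -- Q > 0
  have hQpos : 0 < Q := by
    rcases lt_or_eq_of_le hQnonneg with h | h
    · exact h
    exfalso
    apply hP0
    have hterm : ∀ b, ν₂ b * f b ^ 2 = 0 := by
      intro b
      have := (Finset.sum_eq_zero_iff_of_nonneg
        (fun b _ => mul_nonneg (hν₂nonneg b) (sq_nonneg (f b)))).mp h.symm
      exact this b (Finset.mem_univ b)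
    have hμf : ∀ a b, μ (a, b) * f b = 0 := by
      intro a b
      by_cases hμ0 : μ (a, b) = 0
      · rw [hμ0, zero_mul]
      · have hν2 : ν₂ b ≠ 0 := fun h2 =>
          hμ0 (le_antisymm (h2 ▸ hμν₂ a b) (hpos _))
        have : f b ^ 2 = 0 := by
          rcases mul_eq_zero.mp (hterm b) with h' | h'
          · exact absurd h' hν2
          · exact h'
        rw [pow_eq_zero_iff (by norm_num) |>.mp this, mul_zero]
    rw [hPdef]
    apply Finset.sum_eq_zero
    intro a _
    have : ν₁ a * T a = 0 := by rw [hTmul]; exact Finset.sum_eq_zero fun b _ => hμf a b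
    rw [sq, ← mul_assoc, this, zero_mul]
  -- apply hcorr
  set sP := Real.sqrt P with hsP
  set sQ := Real.sqrt Q with hsQ
  have hsPpos : 0 < sP := Real.sqrt_pos.mpr hPpos
  have hsQpos : 0 < sQ := Real.sqrt_pos.mpr hQpos
  have hsP2 : sP ^ 2 = P := Real.sq_sqrt hPnonneg
  have hsQ2 : sQ ^ 2 = Q := Real.sq_sqrt hQnonneg
  have key : ∑ p : Ω₁ × Ω₂, μ p * |(T p.1 / sP) * (f p.2 / sQ)| ≤ ρ := by
    refine hcorr (fun a => T a / sP) (fun b => f b / sQ) ?_ ?_ ?_ ?_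
    · rw [Fintype.sum_prod_type]
      have : ∀ a, ∑ b, μ (a, b) * (T a / sP) = (ν₁ a * T a) / sP := by
        intro a
        rw [← Finset.sum_mul, ← hν₁ a, mul_div_assoc]
      simp only [this]
      rw [← Finset.sum_div]
      have : ∑ a, ν₁ a * T a = 0 := by
        have : ∀ a, ν₁ a * T a = ∑ b, μ (a, b) * f b := hTmul
        simp only [this]
        rw [Finset.sum_comm]
        rw [← hf]
        refine Finset.sum_congr rfl fun b _ => ?_
        rw [hν₂, Finset.sum_mul]
      rw [this, zero_div]
    · rw [Fintype.sum_prod_type_right]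
      have : ∀ b, ∑ a, μ (a, b) * (f b / sQ) = ν₂ b * f b / sQ := by
        intro b
        rw [← Finset.sum_mul, ← hν₂ b, mul_div_assoc]
      simp only [this]
      rw [← Finset.sum_div, hf, zero_div]
    · rw [Fintype.sum_prod_type]
      have : ∀ a, ∑ b, μ (a, b) * (T a / sP) ^ 2 = ν₁ a * (T a / sP) ^ 2 := by
        intro a
        rw [← Finset.sum_mul, hν₁]
      simp only [this]
      have : ∀ a, ν₁ a * (T a / sP) ^ 2 = ν₁ a * T a ^ 2 / P := by
        intro a
        rw [div_pow, hsP2, mul_div_assoc]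
      simp only [this]
      rw [← Finset.sum_div, ← hPdef, div_self hP0]
    · rw [Fintype.sum_prod_type_right]
      have : ∀ b, ∑ a, μ (a, b) * (f b / sQ) ^ 2 = ν₂ b * (f b / sQ) ^ 2 := by
        intro b
        rw [← Finset.sum_mul, hν₂]
      simp only [this]
      have : ∀ b, ν₂ b * (f b / sQ) ^ 2 = ν₂ b * f b ^ 2 / Q := by
        intro b
        rw [div_pow, hsQ2, mul_div_assoc]
      simp only [this]
      rw [← Finset.sum_div, ← hQdef, div_self (ne_of_gt hQpos)]
  have habs : ∀ p : Ω₁ × Ω₂, μ p * |(T p.1 / sP) * (f p.2 / sQ)|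
      = μ p * |T p.1 * f p.2| / (sP * sQ) := by
    intro p
    rw [div_mul_div_comm, abs_div, abs_of_pos (mul_pos hsPpos hsQpos), mul_div_assoc]
  have key2 : ∑ p : Ω₁ × Ω₂, μ p * |T p.1 * f p.2| ≤ ρ * (sP * sQ) := by
    have := key
    simp only [habs] at this
    rw [← Finset.sum_div] at this
    calc ∑ p : Ω₁ × Ω₂, μ p * |T p.1 * f p.2|
        = (∑ p : Ω₁ × Ω₂, μ p * |T p.1 * f p.2|) / (sP * sQ) * (sP * sQ) := by
          field_simp
      _ ≤ ρ * (sP * sQ) := by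
          apply mul_le_mul_of_nonneg_right this (le_of_lt (mul_pos hsPpos hsQpos))
  have hPle : P ≤ ρ * (sP * sQ) := by
    have h1 : P = ∑ p : Ω₁ × Ω₂, μ p * (f p.2 * T p.1) := by
      rw [hPdef, Fintype.sum_prod_type]
      refine Finset.sum_congr rfl fun a _ => ?_
      rw [sq, ← mul_assoc, hTmul, Finset.sum_mul]
      refine Finset.sum_congr rfl fun b _ => ?_
      ring
    rw [h1]
    refine le_trans (Finset.sum_le_sum fun p _ => ?_) key2
    have : f p.2 * T p.1 ≤ |T p.1 * f p.2| := by
      rw [mul_comm]; exact le_abs_self _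
    exact mul_le_mul_of_nonneg_left this (hpos p)
  -- conclude
  have h1 : sP ≤ ρ * sQ := by
    have h2 : sP * sP ≤ (ρ * sQ) * sP := by
      nlinarith [hsP2, hPle]
    exact le_of_mul_le_mul_right h2 hsPpos
  calc P = sP ^ 2 := hsP2.symm
    _ ≤ (ρ * sQ) ^ 2 := by
        apply pow_le_pow_left₀ (le_of_lt hsPpos) h1 2
    _ = ρ ^ 2 * Q := by rw [mul_pow, hsQ2]

lemma key_step {Ω₁ Ω₂ : Type*} [Fintype Ω₁] [Fintype Ω₂] [DecidableEq Ω₂]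
    [Nonempty Ω₁] [Nonempty Ω₂] {n : ℕ}
    (μ : Ω₁ × Ω₂ → ℝ) (hpos : ∀ p, 0 ≤ μ p)
    (ρ : ℝ) (hρ : 0 ≤ ρ)
    (hcorr : ∀ (f : Ω₁ → ℝ) (g : Ω₂ → ℝ),
      (∑ p : Ω₁ × Ω₂, μ p * f p.1 = 0) → (∑ p : Ω₁ × Ω₂, μ p * g p.2 = 0) →
      (∑ p : Ω₁ × Ω₂, μ p * f p.1 ^ 2 ≤ 1) → (∑ p : Ω₁ × Ω₂, μ p * g p.2 ^ 2 ≤ 1) →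
      ∑ p : Ω₁ × Ω₂, μ p * |f p.1 * g p.2| ≤ ρ)
    (ν₁ : Ω₁ → ℝ) (hν₁ : ∀ a, ν₁ a = ∑ b : Ω₂, μ (a, b)) (hν₁sum : ∑ a : Ω₁, ν₁ a = 1)
    (ν₂ : Ω₂ → ℝ) (hν₂ : ∀ b, ν₂ b = ∑ a : Ω₁, μ (a, b)) (hν₂sum : ∑ b : Ω₂, ν₂ b = 1)
    (S : Finset (Fin n)) (gS : (Fin n → Ω₂) → ℝ)
    (hmean : ∀ S' : Finset (Fin n), ¬ S ⊆ S' → ∀ a : Fin n → Ω₂,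
      ∑ y ∈ Finset.univ.filter (fun y : Fin n → Ω₂ => ∀ i ∈ S', y i = a i),
        (∏ i : Fin n, ν₂ (y i)) * gS y = 0)
    (T : Finset (Fin n)) (i : Fin n) (hiS : i ∈ S) (hiT : i ∉ T) :
    ESA μ ν₁ ν₂ gS (insert i T) ≤ ρ ^ 2 * ESA μ ν₁ ν₂ gS T := by
  classical
  obtain ⟨c₁⟩ := (inferInstance : Nonempty Ω₁)
  obtain ⟨c₂⟩ := (inferInstance : Nonempty Ω₂)
  have hν₁nonneg : ∀ a, 0 ≤ ν₁ a := fun a => by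
    rw [hν₁]; exact Finset.sum_nonneg fun b _ => hpos _
  have hν₂nonneg : ∀ b, 0 ≤ ν₂ b := fun b => by
    rw [hν₂]; exact Finset.sum_nonneg fun a _ => hpos _
  unfold ESA
  rw [sum_update_group2 i c₁ c₂ (fun x y => ((∏ j, ν₁ (x j)) * ∏ j, ν₂ (y j)) *
    (ESh μ ν₁ ν₂ gS (insert i T) x y) ^ 2)]
  rw [sum_update_group2 i c₁ c₂ (fun x y => ((∏ j, ν₁ (x j)) * ∏ j, ν₂ (y j)) *
    (ESh μ ν₁ ν₂ gS T x y) ^ 2)]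
  rw [Finset.mul_sum]
  refine Finset.sum_le_sum fun x _ => ?_
  rw [Finset.mul_sum]
  refine Finset.sum_le_sum fun y _ => ?_
  by_cases hcond : x i = c₁ ∧ y i = c₂
  swap
  · simp [hcond]
  rw [if_pos hcond, if_pos hcond]
  set f : Ω₂ → ℝ := fun b => ESh μ ν₁ ν₂ gS T x (Function.update y i b) with hf
  set P1 : ℝ := ∏ j ∈ Finset.univ.erase i, ν₁ (x j) with hP1
  set P2 : ℝ := ∏ j ∈ Finset.univ.erase i, ν₂ (y j) with hP2
  have hxprod : ∀ a : Ω₁, (∏ j, ν₁ (Function.update x i a j)) = ν₁ a * P1 := by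
    intro a
    rw [← Finset.mul_prod_erase Finset.univ _ (Finset.mem_univ i), Function.update_self]
    congr 1
    exact Finset.prod_congr rfl fun j hj =>
      by rw [Function.update_of_ne (Finset.mem_erase.mp hj).1]
  have hyprod : ∀ b : Ω₂, (∏ j, ν₂ (Function.update y i b j)) = ν₂ b * P2 := by
    intro b
    rw [← Finset.mul_prod_erase Finset.univ _ (Finset.mem_univ i), Function.update_self]
    congr 1
    exact Finset.prod_congr rfl fun j hj =>
      by rw [Function.update_of_ne (Finset.mem_erase.mp hj).1]
  have hTfed : ∀ (a : Ω₁) (b : Ω₂),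
      ESh μ ν₁ ν₂ gS (insert i T) (Function.update x i a) (Function.update y i b)
        = ∑ b' : Ω₂, μ (a, b') / ν₁ a * f b' := by
    intro a b
    rw [ESh_insert μ ν₁ ν₂ hν₂sum gS T i hiT]
    refine Finset.sum_congr rfl fun b' _ => ?_
    rw [Function.update_self]
    congr 1
    rw [Function.update_idem]
    exact ESh_congr_x μ ν₁ ν₂ gS T
      (fun j hj => Function.update_of_ne (ne_of_mem_of_not_mem hj hiT) _ _) _
  have hTf2 : ∀ (a : Ω₁) (b : Ω₂),
      ESh μ ν₁ ν₂ gS T (Function.update x i a) (Function.update y i b) = f b :=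
    fun a b => ESh_congr_x μ ν₁ ν₂ gS T
      (fun j hj => Function.update_of_ne (ne_of_mem_of_not_mem hj hiT) _ _) _
  have hL : (∑ a : Ω₁, ∑ b : Ω₂,
        ((∏ j, ν₁ (Function.update x i a j)) * ∏ j, ν₂ (Function.update y i b j)) *
          (ESh μ ν₁ ν₂ gS (insert i T) (Function.update x i a)
            (Function.update y i b)) ^ 2)
      = (P1 * P2) * ∑ a : Ω₁, ν₁ a * (∑ b' : Ω₂, μ (a, b') / ν₁ a * f b') ^ 2 := by
    rw [Finset.mul_sum]
    refine Finset.sum_congr rfl fun a _ => ?_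
    have hterm : ∀ b : Ω₂,
        ((∏ j, ν₁ (Function.update x i a j)) * ∏ j, ν₂ (Function.update y i b j)) *
          (ESh μ ν₁ ν₂ gS (insert i T) (Function.update x i a)
            (Function.update y i b)) ^ 2
        = ν₂ b * ((P1 * P2) * (ν₁ a * (∑ b' : Ω₂, μ (a, b') / ν₁ a * f b') ^ 2)) := by
      intro b
      rw [hxprod, hyprod, hTfed]
      ring
    simp only [hterm]
    rw [← Finset.sum_mul, hν₂sum, one_mul]
  have hR : (∑ a : Ω₁, ∑ b : Ω₂,
        ((∏ j, ν₁ (Function.update x i a j)) * ∏ j, ν₂ (Function.update y i b j)) *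
          (ESh μ ν₁ ν₂ gS T (Function.update x i a) (Function.update y i b)) ^ 2)
      = (P1 * P2) * ∑ b : Ω₂, ν₂ b * f b ^ 2 := by
    have hterm : ∀ (a : Ω₁) (b : Ω₂),
        ((∏ j, ν₁ (Function.update x i a j)) * ∏ j, ν₂ (Function.update y i b j)) *
          (ESh μ ν₁ ν₂ gS T (Function.update x i a) (Function.update y i b)) ^ 2
        = ν₁ a * ((P1 * P2) * (ν₂ b * f b ^ 2)) := by
      intro a b
      rw [hxprod, hyprod, hTf2]
      ring
    simp only [hterm]
    simp only [← Finset.mul_sum]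
    rw [← Finset.sum_mul, hν₁sum, one_mul]
  rw [hL, hR]
  by_cases hW : P1 * P2 = 0
  · rw [hW]; simp
  have hP2ne : P2 ≠ 0 := fun h => hW (by rw [h, mul_zero])
  have hmean0 : ∑ b : Ω₂, ν₂ b * f b = 0 := by
    refine ESh_mean_zero μ hpos ν₁ ν₂ hν₂ S gS hmean T i hiS hiT x y fun j hj => ?_
    exact Finset.prod_ne_zero_iff.mp hP2ne j
      (Finset.mem_erase.mpr ⟨hj, Finset.mem_univ _⟩)
  have hsingle := single_step μ hpos ρ hρ hcorr ν₁ hν₁ ν₂ hν₂ f hmean0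
  have hWnonneg : 0 ≤ P1 * P2 :=
    mul_nonneg (Finset.prod_nonneg fun j _ => hν₁nonneg _)
      (Finset.prod_nonneg fun j _ => hν₂nonneg _)
  calc (P1 * P2) * ∑ a : Ω₁, ν₁ a * (∑ b' : Ω₂, μ (a, b') / ν₁ a * f b') ^ 2
      ≤ (P1 * P2) * (ρ ^ 2 * ∑ b : Ω₂, ν₂ b * f b ^ 2) :=
        mul_le_mul_of_nonneg_left hsingle hWnonneg
    _ = ρ ^ 2 * ((P1 * P2) * ∑ b : Ω₂, ν₂ b * f b ^ 2) := by ring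

/-- Mossel's Proposition 2.12: if the maximal correlation of `(Ω₁ × Ω₂, μ)` is at
most `ρ`, then for any Efron–Stein component `g_S` (depending only on coordinates
in `S` and with vanishing conditional means on all non-supersets of `S`) of a
function on the product space, the Markov operator `U` (conditional expectation)
satisfies `‖U g_S‖₂ ≤ ρ^{|S|} ‖g_S‖₂`. -/
theorem markov_operator_efron_stein_decay {Ω₁ Ω₂ : Type*} [Fintype Ω₁] [Fintype Ω₂]
    [DecidableEq Ω₂] {n : ℕ}
    (μ : Ω₁ × Ω₂ → ℝ) (hpos : ∀ p, 0 ≤ μ p) (hsum : ∑ p : Ω₁ × Ω₂, μ p = 1)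
    (ρ : ℝ) (hρ : 0 ≤ ρ)
    (hcorr : ∀ (f : Ω₁ → ℝ) (g : Ω₂ → ℝ),
      (∑ p : Ω₁ × Ω₂, μ p * f p.1 = 0) → (∑ p : Ω₁ × Ω₂, μ p * g p.2 = 0) →
      (∑ p : Ω₁ × Ω₂, μ p * f p.1 ^ 2 ≤ 1) → (∑ p : Ω₁ × Ω₂, μ p * g p.2 ^ 2 ≤ 1) →
      ∑ p : Ω₁ × Ω₂, μ p * |f p.1 * g p.2| ≤ ρ)
    (ν₁ : Ω₁ → ℝ) (hν₁ : ∀ a, ν₁ a = ∑ b : Ω₂, μ (a, b))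
    (ν₂ : Ω₂ → ℝ) (hν₂ : ∀ b, ν₂ b = ∑ a : Ω₁, μ (a, b))
    (S : Finset (Fin n)) (gS : (Fin n → Ω₂) → ℝ)
    (hdep : ∀ y y' : Fin n → Ω₂, (∀ i ∈ S, y i = y' i) → gS y = gS y')
    (hmean : ∀ S' : Finset (Fin n), ¬ S ⊆ S' → ∀ a : Fin n → Ω₂,
      ∑ y ∈ Finset.univ.filter (fun y : Fin n → Ω₂ => ∀ i ∈ S', y i = a i),
        (∏ i : Fin n, ν₂ (y i)) * gS y = 0)
    (U : ((Fin n → Ω₂) → ℝ) → ((Fin n → Ω₁) → ℝ))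
    (hU : ∀ (g : (Fin n → Ω₂) → ℝ) (x : Fin n → Ω₁),
      U g x = ∑ y : Fin n → Ω₂, (∏ i : Fin n, μ (x i, y i) / ν₁ (x i)) * g y) :
    Real.sqrt (∑ x : Fin n → Ω₁, (∏ i : Fin n, ν₁ (x i)) * U gS x ^ 2) ≤
      ρ ^ S.card * Real.sqrt (∑ y : Fin n → Ω₂, (∏ i : Fin n, ν₂ (y i)) * gS y ^ 2) := by
  classical
  have hν₁sum : ∑ a : Ω₁, ν₁ a = 1 := by
    simp only [hν₁]
    rw [← Fintype.sum_prod_type]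
    exact hsum
  have hν₂sum : ∑ b : Ω₂, ν₂ b = 1 := by
    simp only [hν₂]
    rw [← Fintype.sum_prod_type_right]
    exact hsum
  haveI hne1 : Nonempty Ω₁ := by
    by_contra h
    rw [not_nonempty_iff] at h
    rw [Finset.univ_eq_empty, Finset.sum_empty] at hν₁sum
    exact one_ne_zero hν₁sum.symm
  haveI hne2 : Nonempty Ω₂ := by
    by_contra h
    rw [not_nonempty_iff] at h
    rw [Finset.univ_eq_empty, Finset.sum_empty] at hν₂sum
    exact one_ne_zero hν₂sum.symm
  have hind : ∀ T : Finset (Fin n),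
      ESA μ ν₁ ν₂ gS T ≤ ρ ^ (2 * (T ∩ S).card) * ESA μ ν₁ ν₂ gS ∅ := by
    intro T
    induction T using Finset.induction_on with
    | empty => simp
    | @insert i T hiT ih =>
      by_cases hiS : i ∈ S
      · calc ESA μ ν₁ ν₂ gS (insert i T)
            ≤ ρ ^ 2 * ESA μ ν₁ ν₂ gS T :=
              key_step μ hpos ρ hρ hcorr ν₁ hν₁ hν₁sum ν₂ hν₂ hν₂sum S gS hmean
                T i hiS hiT
          _ ≤ ρ ^ 2 * (ρ ^ (2 * (T ∩ S).card) * ESA μ ν₁ ν₂ gS ∅) :=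
              mul_le_mul_of_nonneg_left ih (pow_nonneg hρ 2)
          _ = ρ ^ (2 * ((insert i T ∩ S)).card) * ESA μ ν₁ ν₂ gS ∅ := by
              rw [Finset.insert_inter_of_mem hiS,
                Finset.card_insert_of_notMem (fun h => hiT (Finset.mem_inter.mp h).1)]
              rw [Nat.mul_add, Nat.mul_one, pow_add]
              ring
      · rw [ESA_insert_eq μ ν₁ hν₁ ν₂ hν₂sum S gS hdep T i hiS hiT,
          Finset.insert_inter_of_notMem hiS]
        exact ih
  have h := hind Finset.univ
  rw [Finset.univ_inter] at h
  rw [← ESA_univ μ ν₁ ν₂ gS hν₂sum U hU, ← ESA_empty μ ν₁ ν₂ gS hν₁sum hν₂sum]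
  calc Real.sqrt (ESA μ ν₁ ν₂ gS Finset.univ)
      ≤ Real.sqrt (ρ ^ (2 * S.card) * ESA μ ν₁ ν₂ gS ∅) := Real.sqrt_le_sqrt h
    _ = ρ ^ S.card * Real.sqrt (ESA μ ν₁ ν₂ gS ∅) := by
        rw [Real.sqrt_mul (by positivity)]
        congr 1
        rw [mul_comm 2 S.card, pow_mul, Real.sqrt_sq (pow_nonneg hρ _)]
end
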